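/- arXiv:1003.6020 — 3 statements merged into one kernel-verified Lean document; each statement's English description precedes it below -/
import Mathlib

section
/- As x → ∞, Γ(x+1) / (x^x · e^{-x} · √(2πx)) tends to 1 (Stirling's formula). -/
/-!
For `0 ≤ t ≤ 1`, log-convexity of `Γ` squeezes `log Γ(n + t + 1)` between `log n! + t log n`
and `log n! + t log (n + 1)`. Hence the logarithm of the Stirling ratio at `x` differs from its
value at `⌊x⌋` by `O(1 / ⌊x⌋)`, and the formula for real `x` follows from Stirling's formula for
factorials.
-/

open Real Filter Topology
open scoped Nat

namespace Real

lemma log_Gamma_add_one {y : ℝ} (hy : 0 < y) :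
    log (Gamma (y + 1)) = log (Gamma y) + log y := by
  rw [Gamma_add_one hy.ne', log_mul hy.ne' (Gamma_pos_of_pos hy).ne', add_comm]

lemma log_factorial_add_le_log_Gamma {n : ℕ} (hn : n ≠ 0) {t : ℝ} (ht : 0 ≤ t) :
    log n ! + t * log n ≤ log (Gamma (n + t + 1)) := by
  rcases ht.eq_or_lt with rfl | ht
  · simp [Gamma_nat_eq_factorial]
  have := BohrMollerup.f_add_nat_ge convexOn_log_Gamma log_Gamma_add_one (n := n + 1) (by omega) ht
  simpa [Gamma_nat_eq_factorial, add_right_comm _ t] using this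

lemma log_Gamma_le_log_factorial_add {n : ℕ} {t : ℝ} (ht₀ : 0 ≤ t) (ht₁ : t ≤ 1) :
    log (Gamma (n + t + 1)) ≤ log n ! + t * log (n + 1) := by
  rcases ht₀.eq_or_lt with rfl | ht₀
  · simp [Gamma_nat_eq_factorial]
  have := BohrMollerup.f_add_nat_le convexOn_log_Gamma log_Gamma_add_one (n := n + 1)
    n.succ_ne_zero ht₀ ht₁
  simpa [Gamma_nat_eq_factorial, add_right_comm _ t] using this

lemma sub_div_le_log_sub_log {a b : ℝ} (ha : 0 < a) (hb : 0 < b) :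
    (b - a) / b ≤ log b - log a := by
  have := one_sub_inv_le_log_of_pos (div_pos hb ha)
  rwa [← log_div hb.ne' ha.ne', sub_div, div_self hb.ne', ← inv_div]

lemma log_sub_log_le_sub_div {a b : ℝ} (ha : 0 < a) (hb : 0 < b) :
    log b - log a ≤ (b - a) / a := by
  have := log_le_sub_one_of_pos (div_pos hb ha)
  rwa [← log_div hb.ne' ha.ne', sub_div, div_self ha.ne']

noncomputable def stirlingRatio (x : ℝ) : ℝ :=
  Gamma (x + 1) / (x ^ x * exp (-x) * √(2 * π * x))

lemma stirlingRatio_pos {x : ℝ} (hx : 0 < x) : 0 < stirlingRatio x := by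
  unfold stirlingRatio
  have := Gamma_pos_of_pos (by linarith : 0 < x + 1)
  positivity

lemma log_stirlingRatio {x : ℝ} (hx : 0 < x) :
    log (stirlingRatio x) =
      log (Gamma (x + 1)) - (x * log x - x + (log (2 * π) + log x) / 2) := by
  have hΓ := Gamma_pos_of_pos (by linarith : 0 < x + 1)
  rw [stirlingRatio, log_div hΓ.ne' (by positivity), log_mul (by positivity) (by positivity),
    log_mul (by positivity) (by positivity), log_rpow hx, log_exp, log_sqrt (by positivity),
    log_mul (by positivity) hx.ne']
  ring

lemma stirlingRatio_natCast (n : ℕ) : stirlingRatio n = Stirling.stirlingSeq n / √π := by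
  rw [stirlingRatio, Stirling.stirlingSeq, Gamma_nat_eq_factorial, rpow_natCast, div_pow,
    exp_one_pow, exp_neg, mul_comm 2 π, mul_assoc π, sqrt_mul pi_pos.le]
  field_simp

lemma tendsto_stirlingRatio_natCast :
    Tendsto (fun n : ℕ => stirlingRatio n) atTop (𝓝 1) := by
  simp_rw [stirlingRatio_natCast]
  simpa [(sqrt_pos.2 pi_pos).ne'] using
    Stirling.tendsto_stirlingSeq_sqrt_pi.div_const √π

lemma abs_log_stirlingRatio_sub_le {n : ℕ} (hn : n ≠ 0) {x : ℝ} (hnx : n ≤ x)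
    (hxn : x ≤ n + 1) :
    |log (stirlingRatio x) - log (stirlingRatio n)| ≤ 2 / n := by
  have hn₀ : (0 : ℝ) < n := by positivity
  have hx₀ : 0 < x := hn₀.trans_le hnx
  set t := x - n
  have hx : x = n + t := by ring
  have hΓ_lo := log_factorial_add_le_log_Gamma hn (by linarith : 0 ≤ t)
  have hΓ_hi := log_Gamma_le_log_factorial_add (n := n) (by linarith : 0 ≤ t) (by linarith)
  rw [← hx] at hΓ_lo hΓ_hi
  have hd_lo := sub_div_le_log_sub_log hn₀ hx₀
  have hd_hi := log_sub_log_le_sub_div hn₀ hx₀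
  have hsucc := log_sub_log_le_sub_div hn₀ (by linarith : (0 : ℝ) < n + 1)
  set d := log x - log n
  have hxd_lo : t ≤ x * d := by
    calc t = x * (t / x) := by field_simp
      _ ≤ x * d := by gcongr
  have hxd_hi : x * d ≤ t + 1 / n := by
    calc x * d ≤ x * (t / n) := by gcongr
      _ = t + t * t / n := by rw [hx]; field_simp
      _ ≤ t + 1 / n := by gcongr; nlinarith
  have hd_nonneg : 0 ≤ d := (div_nonneg (by linarith) hx₀.le).trans hd_lo
  have hd_le : d ≤ 1 / n := hd_hi.trans (by gcongr; linarith)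
  have hinterp : log (Gamma (x + 1)) - log n ! - t * log n ≤ 1 / n := by
    calc _ ≤ t * (log (n + 1) - log n) := by linarith
      _ ≤ log (n + 1) - log n :=
        mul_le_of_le_one_left (sub_nonneg.2 (log_le_log hn₀ (by linarith))) (by linarith)
      _ ≤ 1 / n := by simpa using hsucc
  have hsplit : log (stirlingRatio x) - log (stirlingRatio n) =
      (log (Gamma (x + 1)) - log n ! - t * log n) - (x * d - t) - d / 2 := by
    rw [log_stirlingRatio hx₀, log_stirlingRatio hn₀, Gamma_nat_eq_factorial]
    ring
  rw [hsplit, abs_le]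
  have h_two : 2 / (n : ℝ) = 2 * (1 / n) := by ring
  constructor <;> linarith

end Real

theorem stirling_formula :
    Tendsto (fun x : ℝ =>
      Real.Gamma (x + 1) / (x ^ x * Real.exp (-x) * Real.sqrt (2 * π * x)))
      atTop (nhds 1) := by
  have h_nat : Tendsto (fun n : ℕ => log (stirlingRatio n)) atTop (𝓝 0) := by
    simpa using tendsto_stirlingRatio_natCast.log one_ne_zero
  have h_gap : Tendsto (fun x : ℝ => log (stirlingRatio x) - log (stirlingRatio ⌊x⌋₊))
      atTop (𝓝 0) := by
    refine squeeze_zero_norm' ?_ ((tendsto_const_div_atTop_nhds_zero_nat 2).comp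
      tendsto_nat_floor_atTop)
    filter_upwards [eventually_ge_atTop 1] with x hx
    exact abs_log_stirlingRatio_sub_le (Nat.floor_pos.2 hx).ne' (Nat.floor_le (by linarith))
      (Nat.lt_floor_add_one x).le
  have h_log : Tendsto (fun x => log (stirlingRatio x)) atTop (𝓝 0) := by
    simpa using (h_nat.comp tendsto_nat_floor_atTop).add h_gap
  have h_exp : Tendsto (fun x => exp (log (stirlingRatio x))) atTop (𝓝 1) := by
    simpa using h_log.rexp
  refine h_exp.congr' ?_
  filter_upwards [eventually_gt_atTop 0] with x hx
  exact exp_log (stirlingRatio_pos hx)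
end

section
/- There exist constants C > 0 and N such that for all n ≥ N, |C(2n, n) · √(π(n + 1/4)) / 4^n − 1| ≤ C/n² ; i.e., expanding the central binomial coefficient in powers of 1/(n + 1/4), the coefficient of the first power vanishes. -/
open Real Filter Topology Nat

/-!
Let `a n = (C(2n, n) / 4 ^ n) ^ 2 * π (n + 1/4)`, the square of the quantity to be estimated.
Wallis' product gives `a n → 1`. Moreover
`a (n + 1) / a n = (2n + 1)² (4n + 5) / (4 (n + 1)² (4n + 1))`, whose numerator exceeds its
denominator by exactly `1`; so `a` increases to `1`, while `a n * (1 + 1 / n ^ 2)` decreases to `1`,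
the factor `1 + 1 / n ^ 2` falling by about `2 / n ^ 3` per step against the ratio's excess of
about `1 / (16 n ^ 3)`. Hence `1 - 1 / n ^ 2 ≤ a n ≤ 1`, and taking the square root only shrinks
the distance to `1`.
-/

theorem abs_sqrt_sub_one_le_abs_sub_one {a : ℝ} (ha : 0 ≤ a) : |√a - 1| ≤ |a - 1| :=
  calc |√a - 1| ≤ |√a - 1| * (√a + 1) :=
        le_mul_of_one_le_right (abs_nonneg _) (by linarith [sqrt_nonneg a])
    _ = |a - 1| := by
        rw [← abs_of_nonneg (by positivity : 0 ≤ √a + 1), ← abs_mul]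
        congr 1
        nlinarith [sq_sqrt ha]

theorem Real.Wallis.W_eq_centralBinom (n : ℕ) :
    Wallis.W n = 16 ^ n / ((centralBinom n : ℝ) ^ 2 * (2 * n + 1)) := by
  have hfact : ((2 * n)! : ℝ) = centralBinom n * n ! * n ! := by
    rw [centralBinom_eq_two_mul_choose, two_mul]
    exact_mod_cast (add_choose_mul_factorial_mul_factorial n n).symm
  have hc : (centralBinom n : ℝ) ≠ 0 := by exact_mod_cast centralBinom_ne_zero n
  rw [Wallis.W_eq_factorial_ratio, hfact, pow_mul]
  field_simp
  norm_num

noncomputable def centralBinomRatioSq (n : ℕ) : ℝ :=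
  ((centralBinom n : ℝ) / 4 ^ n) ^ 2 * (π * (n + 1 / 4))

theorem centralBinomRatioSq_eq (n : ℕ) :
    centralBinomRatioSq n = π / 2 / Wallis.W n * ((1 / 4 + n) / (1 / 2 + n)) := by
  have hc : (centralBinom n : ℝ) ≠ 0 := by exact_mod_cast centralBinom_ne_zero n
  rw [centralBinomRatioSq, Wallis.W_eq_centralBinom, show (16 : ℝ) ^ n = (4 ^ n) ^ 2 by
    rw [← pow_mul, mul_comm, pow_mul]; norm_num]
  field_simp
  ring

theorem tendsto_centralBinomRatioSq : Tendsto centralBinomRatioSq atTop (𝓝 1) := by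
  have hW : Tendsto (fun n ↦ π / 2 / Wallis.W n) atTop (𝓝 1) := by
    simpa [div_self pi_div_two_pos.ne', Pi.div_def] using
      (tendsto_const_nhds (x := π / 2)).div Wallis.tendsto_W_nhds_pi_div_two pi_div_two_pos.ne'
  have hq : Tendsto (fun n : ℕ ↦ (1 / 4 + n : ℝ) / (1 / 2 + n)) atTop (𝓝 1) := by
    simpa using tendsto_add_mul_div_add_mul_atTop_nhds (1 / 4 : ℝ) (1 / 2) 1 one_ne_zero
  simpa only [← centralBinomRatioSq_eq, mul_one] using hW.mul hq

theorem centralBinomRatioSq_pos (n : ℕ) : 0 < centralBinomRatioSq n := by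
  have hc : (0 : ℝ) < centralBinom n := by exact_mod_cast centralBinom_pos n
  unfold centralBinomRatioSq
  positivity

theorem centralBinomRatioSq_succ (n : ℕ) :
    centralBinomRatioSq (n + 1) * (4 * (n + 1) ^ 2 * (4 * n + 1))
      = centralBinomRatioSq n * ((2 * n + 1) ^ 2 * (4 * n + 5)) := by
  have hrec : (centralBinom (n + 1) : ℝ) = 2 * (2 * n + 1) * centralBinom n / (n + 1) := by
    rw [eq_div_iff (by positivity)]
    exact_mod_cast (mul_comm _ _).trans (succ_mul_centralBinom_succ n)
  rw [centralBinomRatioSq, centralBinomRatioSq, hrec]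
  push_cast
  field_simp
  ring

theorem monotone_centralBinomRatioSq : Monotone centralBinomRatioSq := by
  refine monotone_nat_of_le_succ fun n ↦ le_of_mul_le_mul_right ?_
    (by positivity : (0 : ℝ) < 4 * (n + 1) ^ 2 * (4 * n + 1))
  rw [centralBinomRatioSq_succ]
  exact mul_le_mul_of_nonneg_left (by nlinarith) (centralBinomRatioSq_pos n).le

theorem centralBinomRatioSq_le_one (n : ℕ) : centralBinomRatioSq n ≤ 1 :=
  monotone_centralBinomRatioSq.ge_of_tendsto tendsto_centralBinomRatioSq n

theorem centralBinomRatioSq_succ_mul_le {m : ℕ} (hm : 0 < m) :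
    centralBinomRatioSq (m + 1) * (1 + 1 / ((m + 1 : ℕ) : ℝ) ^ 2)
      ≤ centralBinomRatioSq m * (1 + 1 / (m : ℝ) ^ 2) := by
  push_cast
  set x : ℝ := (m : ℝ)
  have hx : 0 < x := by positivity
  have hD : 0 < 4 * (x + 1) ^ 2 * (4 * x + 1) := by positivity
  have key : (2 * x + 1) ^ 2 * (4 * x + 5) * (1 + 1 / (x + 1) ^ 2)
      ≤ (1 + 1 / x ^ 2) * (4 * (x + 1) ^ 2 * (4 * x + 1)) := by
    have hdiff : (1 + 1 / x ^ 2) * (4 * (x + 1) ^ 2 * (4 * x + 1))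
          - (2 * x + 1) ^ 2 * (4 * x + 5) * (1 + 1 / (x + 1) ^ 2)
        = (4 + 32 * x + 82 * x ^ 2 + 86 * x ^ 3 + 31 * x ^ 4) / (x ^ 2 * (x + 1) ^ 2) := by
      field_simp
      ring
    rw [← sub_nonneg, hdiff]
    positivity
  refine le_of_mul_le_mul_right ?_ hD
  calc centralBinomRatioSq (m + 1) * (1 + 1 / (x + 1) ^ 2) * (4 * (x + 1) ^ 2 * (4 * x + 1))
      = centralBinomRatioSq m * ((2 * x + 1) ^ 2 * (4 * x + 5) * (1 + 1 / (x + 1) ^ 2)) := by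
        rw [mul_right_comm, centralBinomRatioSq_succ]
        ring
    _ ≤ centralBinomRatioSq m * ((1 + 1 / x ^ 2) * (4 * (x + 1) ^ 2 * (4 * x + 1))) :=
        mul_le_mul_of_nonneg_left key (centralBinomRatioSq_pos m).le
    _ = centralBinomRatioSq m * (1 + 1 / x ^ 2) * (4 * (x + 1) ^ 2 * (4 * x + 1)) := by ring

theorem one_le_centralBinomRatioSq_mul {n : ℕ} (hn : 0 < n) :
    1 ≤ centralBinomRatioSq n * (1 + 1 / (n : ℝ) ^ 2) := by
  obtain ⟨m, rfl⟩ := Nat.exists_eq_add_one_of_ne_zero hn.ne'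
  have hlim : Tendsto (fun n : ℕ ↦ centralBinomRatioSq n * (1 + 1 / (n : ℝ) ^ 2)) atTop (𝓝 1) := by
    simpa using tendsto_centralBinomRatioSq.mul
      (tendsto_const_nhds.add (tendsto_const_div_pow 1 2 two_ne_zero))
  exact (antitone_nat_of_succ_le fun k ↦ centralBinomRatioSq_succ_mul_le k.succ_pos).le_of_tendsto
    ((tendsto_add_atTop_iff_nat 1).mpr hlim) m

theorem abs_centralBinomRatioSq_sub_one_le {n : ℕ} (hn : 0 < n) :
    |centralBinomRatioSq n - 1| ≤ 1 / (n : ℝ) ^ 2 := by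
  have hle := centralBinomRatioSq_le_one n
  have hge := one_le_centralBinomRatioSq_mul hn
  have hdiv : centralBinomRatioSq n / (n : ℝ) ^ 2 ≤ 1 / (n : ℝ) ^ 2 := by gcongr
  rw [abs_sub_comm, abs_of_nonneg (sub_nonneg.mpr hle)]
  rw [mul_one_add, mul_one_div] at hge
  linarith

theorem choose_mul_sqrt_div_four_pow_eq_sqrt (n : ℕ) :
    ((2 * n).choose n : ℝ) * √(π * (n + 1 / 4)) / 4 ^ n = √(centralBinomRatioSq n) := by
  rw [centralBinomRatioSq, sqrt_mul (sq_nonneg _), sqrt_sq (by positivity),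
    centralBinom_eq_two_mul_choose]
  ring

theorem central_binom_quarter_shift :
    ∃ C > (0:ℝ), ∃ N : ℕ, ∀ n : ℕ, n ≥ N →
      |(Nat.choose (2 * n) n : ℝ) * Real.sqrt (π * ((n : ℝ) + 1/4)) / 4 ^ n - 1|
        ≤ C / (n : ℝ) ^ 2 := by
  refine ⟨1, one_pos, 1, fun n hn ↦ ?_⟩
  rw [choose_mul_sqrt_div_four_pow_eq_sqrt]
  exact (abs_sqrt_sub_one_le_abs_sub_one (centralBinomRatioSq_pos n).le).trans
    (abs_centralBinomRatioSq_sub_one_le hn)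
end

section
/- For all x ≥ 1, x^x e^{-x} √(2π(x + 1/6)) < Γ(x+1). -/
open Real Filter Topology Asymptotics
open scoped Nat

/-!
With `G(x) = x^x e^{-x} √(2π(x + 1/6))`, the ratio `r(x) = Γ(x+1) / G(x)` decreases under
`x ↦ x + 1` for `x ≥ 1`: the inequality `(x+1) G(x) < G(x+1)` becomes, after taking logarithms,
`1 < x log(1 + 1/x) + ½ log(1 + 1/(x + 1/6))`, which already holds for the first few terms of the
series `log(1 + 1/a) = ∑ 2/(2k+1) (2a+1)^{-(2k+1)}`. On the other hand `r(x + n) → 1`, since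
Euler's limit formula gives `Γ(x + n + 1) ~ n^x n!` and Stirling's formula gives
`G(n + x) ~ n^x n!`. Hence `r(x) > r(x+1) ≥ 1`.
-/

theorem sum_range_le_log_one_add_inv {a : ℝ} (ha : 0 < a) (n : ℕ) :
    ∑ k ∈ Finset.range n, 2 * (1 / (2 * k + 1)) * (1 / (2 * a + 1)) ^ (2 * k + 1) ≤
      log (1 + a⁻¹) :=
  sum_le_hasSum _ (fun k _ => by positivity) (hasSum_log_one_add_inv ha)

theorem one_lt_mul_log_one_add_inv_add_half_log {x : ℝ} (hx : 1 ≤ x) :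
    1 < x * log (1 + x⁻¹) + log (1 + (x + 1/6)⁻¹) / 2 := by
  have hx0 : 0 < x := by linarith
  have h₁ := sum_range_le_log_one_add_inv hx0 3
  have h₂ := sum_range_le_log_one_add_inv (a := x + 1/6) (by linarith) 2
  simp only [Finset.sum_range_succ, Finset.sum_range_zero] at h₁ h₂
  norm_num at h₁ h₂
  have hP : 0 < 1440*x^5 + 3216*x^4 + 2512*x^3 + 508*x^2 - 266*x - 105 := by
    have ht : 0 ≤ x - 1 := by linarith
    nlinarith [pow_nonneg ht 3, pow_nonneg ht 4, pow_nonneg ht 5, sq_nonneg (x - 1)]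
  have hexpand : x * (2 * (2 * x + 1)⁻¹ + 2 / 3 * ((2 * x + 1) ^ 3)⁻¹ +
      2 / 5 * ((2 * x + 1) ^ 5)⁻¹) +
      (2 * (2 * (x + 1 / 6) + 1)⁻¹ + 2 / 3 * ((2 * (x + 1 / 6) + 1) ^ 3)⁻¹) / 2 - 1 =
      (1440*x^5 + 3216*x^4 + 2512*x^3 + 508*x^2 - 266*x - 105) /
        (15 * (2 * x + 1) ^ 5 * (6 * x + 4) ^ 3) := by
    field_simp
    ring
  have := div_pos hP (by positivity : (0:ℝ) < 15 * (2 * x + 1) ^ 5 * (6 * x + 4) ^ 3)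
  nlinarith [mul_le_mul_of_nonneg_left h₁ hx0.le]

theorem tendsto_one_add_div_nat (c : ℝ) : Tendsto (fun n : ℕ => 1 + c / n) atTop (𝓝 1) := by
  simpa using (tendsto_const_div_atTop_nhds_zero_nat c).const_add 1

theorem Real.Gamma_add_nat_eq_mul_prod {s : ℝ} (hs : 0 < s) (n : ℕ) :
    Gamma (s + n) = Gamma s * ∏ j ∈ Finset.range n, (s + j) := by
  induction n with
  | zero => simp
  | succ n ih =>
    rw [Nat.cast_succ, ← add_assoc, Gamma_add_one (by positivity), ih, Finset.prod_range_succ]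
    ring

theorem isEquivalent_Gamma_add_nat {s : ℝ} (hs : 0 < s) :
    (fun n : ℕ => Gamma (s + n + 1)) ~[atTop] fun n => (n : ℝ) ^ s * n ! := by
  refine (isEquivalent_of_tendsto_one ?_).symm
  have hΓ := Gamma_pos_of_pos hs
  have := (GammaSeq_tendsto_Gamma s).div_const (Gamma s)
  rw [div_self hΓ.ne'] at this
  refine this.congr' ?_
  filter_upwards [eventually_ne_atTop 0] with n hn
  have : 0 < ∏ j ∈ Finset.range (n + 1), (s + j) := Finset.prod_pos fun j _ => by positivity
  rw [Pi.div_apply, GammaSeq, add_assoc, ← Nat.cast_add_one, Real.Gamma_add_nat_eq_mul_prod hs]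
  field_simp

noncomputable def gosper (x : ℝ) : ℝ := x ^ x * exp (-x) * √(2 * π * (x + 1/6))

theorem gosper_pos {x : ℝ} (hx : 0 < x) : 0 < gosper x := by
  unfold gosper
  positivity

theorem log_gosper {x : ℝ} (hx : 0 < x) :
    log (gosper x) = x * log x - x + log (2 * π * (x + 1/6)) / 2 := by
  have hπ := pi_pos
  rw [gosper, log_mul (by positivity) (by positivity), log_mul (by positivity) (by positivity),
    log_rpow hx, log_exp, log_sqrt (by positivity)]
  ring

theorem add_one_mul_gosper_lt {x : ℝ} (hx : 1 ≤ x) : (x + 1) * gosper x < gosper (x + 1) := by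
  have hx0 : 0 < x := by linarith
  have hπ := pi_pos
  rw [← log_lt_log_iff (mul_pos (by linarith) (gosper_pos hx0)) (gosper_pos (by linarith)),
    log_mul (by linarith) (gosper_pos hx0).ne', log_gosper hx0, log_gosper (by linarith)]
  have h₁ : log (1 + x⁻¹) = log (x + 1) - log x := by
    rw [← log_div (by linarith) hx0.ne']
    congr 1
    field_simp
  have h₂ :
      log (1 + (x + 1/6)⁻¹) = log (2 * π * (x + 1 + 1/6)) - log (2 * π * (x + 1/6)) := by
    rw [← log_div (by positivity) (by positivity)]
    congr 1
    field_simp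
    ring
  have := one_lt_mul_log_one_add_inv_add_half_log hx
  rw [h₁, h₂] at this
  linarith

theorem gosper_nat_add_div_eq {n : ℕ} (hn : n ≠ 0) {s : ℝ} (hs : 0 < n + s) :
    gosper (n + s) / ((n : ℝ) ^ s * (√(2 * n * π) * (n / exp 1) ^ n)) =
      (1 + s / n) ^ n * exp (-s) * (1 + s / n) ^ s * √(1 + (s + 1/6) / n) := by
  have hn' : (0 : ℝ) < n := by positivity
  have hy : (n : ℝ) + s = n * (1 + s / n) := by field_simp
  have hy0 : 0 < 1 + s / n := by
    rw [hy] at hs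
    exact pos_of_mul_pos_right hs hn'.le
  have hsq : 2 * π * (n + s + 1/6) = 2 * n * π * (1 + (s + 1/6) / n) := by field_simp; ring
  rw [gosper, rpow_add hs, rpow_natCast, hsq, sqrt_mul (by positivity), neg_add, exp_add, hy,
    mul_pow, mul_rpow hn'.le hy0.le, div_pow, exp_one_pow, exp_neg]
  field_simp

theorem isEquivalent_gosper_nat_add (s : ℝ) :
    (fun n : ℕ => gosper (n + s)) ~[atTop] fun n => (n : ℝ) ^ s * n ! := by
  refine IsEquivalent.trans ?_ (IsEquivalent.refl.mul Stirling.factorial_isEquivalent_stirling).symm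
  refine isEquivalent_of_tendsto_one ?_
  have hlim := (((tendsto_one_add_div_pow_exp s).mul_const (exp (-s))).mul
    ((tendsto_one_add_div_nat s).rpow_const (p := s) (Or.inl one_ne_zero))).mul
    (tendsto_one_add_div_nat (s + 1/6)).sqrt
  rw [← exp_add, add_neg_cancel, exp_zero, one_rpow, sqrt_one, mul_one, mul_one] at hlim
  refine hlim.congr' ?_
  filter_upwards [eventually_ne_atTop 0,
    (tendsto_natCast_atTop_atTop (R := ℝ)).eventually_gt_atTop (-s)] with n hn hns
  exact (gosper_nat_add_div_eq hn (by linarith)).symm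

noncomputable def gosperRatio (x : ℝ) : ℝ := Gamma (x + 1) / gosper x

theorem gosperRatio_add_one_lt {x : ℝ} (hx : 1 ≤ x) : gosperRatio (x + 1) < gosperRatio x := by
  have hx0 : 0 < x := by linarith
  have hΓ := Gamma_pos_of_pos (by linarith : 0 < x + 1)
  calc gosperRatio (x + 1) = (x + 1) * Gamma (x + 1) / gosper (x + 1) := by
        rw [gosperRatio, Gamma_add_one (by linarith)]
    _ < (x + 1) * Gamma (x + 1) / ((x + 1) * gosper x) :=
        div_lt_div_of_pos_left (by positivity) (mul_pos (by linarith) (gosper_pos hx0))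
          (add_one_mul_gosper_lt hx)
    _ = gosperRatio x := by rw [mul_div_mul_left _ _ (by linarith), gosperRatio]

theorem tendsto_gosperRatio_add_nat {x : ℝ} (hx : 0 < x) :
    Tendsto (fun n : ℕ => gosperRatio (x + n)) atTop (𝓝 1) := by
  have hequiv := (isEquivalent_Gamma_add_nat hx).trans (isEquivalent_gosper_nat_add x).symm
  rw [isEquivalent_iff_tendsto_one
    (Eventually.of_forall fun n => (gosper_pos (by positivity)).ne')] at hequiv
  refine hequiv.congr fun n => ?_
  rw [Pi.div_apply, gosperRatio, add_comm (n : ℝ) x]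

theorem gosper_lower_bound (x : ℝ) (hx : 1 ≤ x) :
    x ^ x * Real.exp (-x) * Real.sqrt (2 * π * (x + 1/6)) < Real.Gamma (x + 1) := by
  have hx0 : 0 < x := by linarith
  have hanti : Antitone fun n : ℕ => gosperRatio (x + n) := by
    refine antitone_nat_of_succ_le fun n => ?_
    rw [Nat.cast_succ, ← add_assoc]
    exact (gosperRatio_add_one_lt (by linarith [n.cast_nonneg (α := ℝ)])).le
  have h₁ : 1 ≤ gosperRatio (x + 1) := by
    simpa using hanti.le_of_tendsto (tendsto_gosperRatio_add_nat hx0) 1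
  exact (one_lt_div (gosper_pos hx0)).mp (h₁.trans_lt (gosperRatio_add_one_lt hx))
end
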